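/- Let w, v ∈ W and let s = s_i be a simple reflection with vs > v in the Bruhat order. Then p(w, vs) = ((t1+t2)/(v E(α_s)))·p(w,v) − t1 t2 · p(ws,v) if ws > w, and p(w, vs) = (t1+t2)(1/(v E(α_s)) + 1)·p(w,v) + p(ws,v) if ws < w, where v E(α_s) := E(v(α_s)) = v[E(α_s)] and α_s = α_i is the simple root of s. -/

import Mathlib

open CoxeterSystem

/-- `E(λ) = e^{-λ} - 1`. -/
noncomputable def Eelt {Λ : Type*} [AddCommGroup Λ] {K : Type*} [Field K]
    (exp : Multiplicative Λ →* Kˣ) (lam : Λ) : K :=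
  ((exp (Multiplicative.ofAdd (-lam)) : Kˣ) : K) - 1

/-- The Bruhat order on `W`: `u ≤ v` iff there is a chain from `u` to `v` each of whose
steps multiplies on the right by a reflection while increasing the length. -/
def bruhatLE {r : ℕ} {W : Type*} [Group W] {M : CoxeterMatrix (Fin r)}
    (cs : CoxeterSystem M W) (u v : W) : Prop :=
  Relation.ReflTransGen
    (fun a b => (∃ t, cs.IsReflection t ∧ b = a * t) ∧ cs.length a < cs.length b) u v

/-- The strict Bruhat order on `W`. -/
def bruhatLT {r : ℕ} {W : Type*} [Group W] {M : CoxeterMatrix (Fin r)}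
    (cs : CoxeterSystem M W) (u v : W) : Prop :=
  Relation.TransGen
    (fun a b => (∃ t, cs.IsReflection t ∧ b = a * t) ∧ cs.length a < cs.length b) u v

/-- `p(w,v)`: the coefficient of `h_w` in the expansion `Y_v = ∑_w p(w,v) h_w` of the
Yang–Baxter basis element `Y_v` in the standard basis (`hb w = h w`). -/
noncomputable def pCoeff {W : Type*} {K : Type*} [Field K] {H : Type*} [Ring H] [Algebra K H]
    (hb : Module.Basis W K H) (Y : W → H) (w v : W) : K :=
  hb.repr (Y v) w

/-!
Since `Y_{vs} = Y_v (h_s + c)` with `c = (t1+t2)/(v E(α_s))`, we get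
`p(w,vs) = c p(w,v) + [h_w](Y_v h_s)`. Right multiplication by `h_s` sends `h_u` to `h_{us}` if
`us > u` and, by the quadratic relation, to `(t1+t2) h_u - t1 t2 h_{us}` if `us < u`; hence the
coefficient of `h_w` in `Y_v h_s` only involves `p(w,v)` and `p(ws,v)`, with weights depending on
whether `ws > w` or `ws < w`.
-/

theorem mul_self_eq_of_mul_sub_algebraMap_mul_sub_algebraMap_eq_zero {K H : Type*} [CommRing K]
    [Ring H] [Algebra K H] {x : H} {t1 t2 : K}
    (hx : (x - algebraMap K H t1) * (x - algebraMap K H t2) = 0) :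
    x * x = (t1 + t2) • x - (t1 * t2) • 1 := by
  rw [← sub_eq_zero, ← hx]
  simp only [Algebra.smul_def, mul_sub, sub_mul, add_mul, map_add, map_mul, mul_one,
    Algebra.commutes t2 x]
  abel

theorem Module.Basis.repr_mul_add_algebraMap {ι K H : Type*} [CommRing K] [Ring H] [Algebra K H]
    (T : Module.Basis ι K H) (x y : H) (c : K) (w : ι) :
    T.repr (x * (y + algebraMap K H c)) w = T.repr (x * y) w + c * T.repr x w := by
  rw [mul_add, ← Algebra.commutes, ← Algebra.smul_def, map_add, map_smul, Finsupp.add_apply,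
    Finsupp.smul_apply, smul_eq_mul]

namespace CoxeterSystem

variable {B W : Type*} [Group W] {M : CoxeterMatrix B} (cs : CoxeterSystem M W)

theorem mul_simple_eq_iff {u w : W} {i : B} : u * cs.simple i = w ↔ u = w * cs.simple i := by
  constructor <;> rintro rfl <;> simp [simple_mul_simple_cancel_right]

section HeckeBasis

variable {K H : Type*} [CommRing K] [Ring H] [Algebra K H] (T : Module.Basis W K H)
  {i : B} {t1 t2 : K}
  (hmul : ∀ u, ¬cs.IsRightDescent u i → T (u * cs.simple i) = T u * T (cs.simple i))
  (hquad : (T (cs.simple i) - algebraMap K H t1) * (T (cs.simple i) - algebraMap K H t2) = 0)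
include hmul hquad

theorem basis_mul_simple_of_isRightDescent {u : W} (hu : cs.IsRightDescent u i) :
    T u * T (cs.simple i) = (t1 + t2) • T u - (t1 * t2) • T (u * cs.simple i) := by
  have hT : T u = T (u * cs.simple i) * T (cs.simple i) := by
    simpa [simple_mul_simple_cancel_right] using
      hmul (u * cs.simple i) (cs.isRightDescent_iff_not_isRightDescent_mul.mp hu)
  calc T u * T (cs.simple i)
      = T (u * cs.simple i) * (T (cs.simple i) * T (cs.simple i)) := by rw [hT, mul_assoc]
    _ = (t1 + t2) • (T (u * cs.simple i) * T (cs.simple i)) - (t1 * t2) • T (u * cs.simple i) := by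
      rw [mul_self_eq_of_mul_sub_algebraMap_mul_sub_algebraMap_eq_zero hquad, mul_sub,
        mul_smul_comm, mul_smul_comm, mul_one]
    _ = _ := by rw [← hT]

theorem repr_mul_simple_of_not_isRightDescent {w : W} (hw : ¬cs.IsRightDescent w i) (x : H) :
    T.repr (x * T (cs.simple i)) w = -(t1 * t2) * T.repr x (w * cs.simple i) := by
  classical
  suffices (T.coord w).comp (LinearMap.mulRight K (T (cs.simple i)))
      = -(t1 * t2) • T.coord (w * cs.simple i) by
    simpa using LinearMap.congr_fun this x
  refine T.ext fun u => ?_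
  simp only [LinearMap.comp_apply, LinearMap.mulRight_apply, LinearMap.smul_apply,
    Module.Basis.coord_apply, smul_eq_mul]
  by_cases hu : cs.IsRightDescent u i
  · have huw : u ≠ w := by rintro rfl; exact hw hu
    rw [basis_mul_simple_of_isRightDescent cs T hmul hquad hu]
    simp only [map_sub, map_smul, Finsupp.sub_apply, Finsupp.smul_apply, smul_eq_mul,
      T.repr_self_apply, mul_simple_eq_iff, if_neg huw]
    split_ifs <;> ring
  · have hus : u ≠ w * cs.simple i := by
      rintro rfl
      exact hu (cs.isRightDescent_iff_not_isRightDescent_mul.mpr (by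
        rwa [simple_mul_simple_cancel_right]))
    rw [← hmul u hu]
    simp only [T.repr_self_apply, mul_simple_eq_iff, if_neg hus]
    ring

theorem repr_mul_simple_of_isRightDescent {w : W} (hw : cs.IsRightDescent w i) (x : H) :
    T.repr (x * T (cs.simple i)) w = (t1 + t2) * T.repr x w + T.repr x (w * cs.simple i) := by
  classical
  suffices (T.coord w).comp (LinearMap.mulRight K (T (cs.simple i)))
      = (t1 + t2) • T.coord w + T.coord (w * cs.simple i) by
    simpa using LinearMap.congr_fun this x
  refine T.ext fun u => ?_
  simp only [LinearMap.comp_apply, LinearMap.mulRight_apply, LinearMap.add_apply,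
    LinearMap.smul_apply, Module.Basis.coord_apply, smul_eq_mul]
  by_cases hu : cs.IsRightDescent u i
  · have hus : u ≠ w * cs.simple i := by
      rintro rfl
      exact cs.isRightDescent_iff_not_isRightDescent_mul.mp hw hu
    rw [basis_mul_simple_of_isRightDescent cs T hmul hquad hu]
    simp only [map_sub, map_smul, Finsupp.sub_apply, Finsupp.smul_apply, smul_eq_mul,
      T.repr_self_apply, mul_simple_eq_iff, if_neg hus]
    ring
  · have huw : u ≠ w := by rintro rfl; exact hu hw
    rw [← hmul u hu]
    simp only [T.repr_self_apply, mul_simple_eq_iff, if_neg huw]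
    ring

end HeckeBasis

end CoxeterSystem

section Bruhat

variable {r : ℕ} {W : Type*} [Group W] {M : CoxeterMatrix (Fin r)} {cs : CoxeterSystem M W}

theorem length_lt_of_bruhatLT {u v : W} (h : bruhatLT cs u v) : cs.length u < cs.length v := by
  induction h with
  | single h => exact h.2
  | tail _ h ih => exact ih.trans h.2

theorem bruhatLT_mul_simple_iff {w : W} {i : Fin r} :
    bruhatLT cs w (w * cs.simple i) ↔ ¬cs.IsRightDescent w i := by
  refine ⟨fun h => not_lt.mpr (length_lt_of_bruhatLT h).le,
    fun h => .single ⟨⟨_, cs.isReflection_simple i, rfl⟩, ?_⟩⟩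
  rw [cs.not_isRightDescent_iff.mp h]
  exact Nat.lt_succ_self _

theorem isRightDescent_of_bruhatLT_mul_simple {w : W} {i : Fin r}
    (h : bruhatLT cs (w * cs.simple i) w) : cs.IsRightDescent w i :=
  length_lt_of_bruhatLT h

end Bruhat

theorem pCoeff_right_recurrence_general
    {r : ℕ} {W : Type*} [Group W] {M : CoxeterMatrix (Fin r)}
    (cs : CoxeterSystem M W)
    {Λ : Type*} [AddCommGroup Λ] (α : Fin r → Λ)
    {K : Type*} [Field K] (exp : Multiplicative Λ →* Kˣ)
    (t1 t2 : K) (wK : W →* RingAut K)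
    {H : Type*} [Ring H] [Algebra K H]
    (h : W → H) (hb : Module.Basis W K H)
    (hbasis : ∀ w : W, hb w = h w)
    (hmul : ∀ u v : W, cs.length (u * v) = cs.length u + cs.length v →
      h (u * v) = h u * h v)
    (hquad : ∀ i : Fin r,
      (h (cs.simple i) - algebraMap K H t1) * (h (cs.simple i) - algebraMap K H t2) = 0)
    (Y : W → H)
    (hYrec : ∀ (w : W) (i : Fin r), cs.length (w * cs.simple i) = cs.length w + 1 →
      Y (w * cs.simple i)
        = Y w * (h (cs.simple i) + algebraMap K H ((t1 + t2) / wK w (Eelt exp (α i)))))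
    (w v : W) (i : Fin r)
    (hvs : bruhatLT cs v (v * cs.simple i)) :
    (bruhatLT cs w (w * cs.simple i) →
      pCoeff hb Y w (v * cs.simple i)
        = (t1 + t2) / wK v (Eelt exp (α i)) * pCoeff hb Y w v
          - t1 * t2 * pCoeff hb Y (w * cs.simple i) v) ∧
    (bruhatLT cs (w * cs.simple i) w →
      pCoeff hb Y w (v * cs.simple i)
        = (t1 + t2) * (1 / wK v (Eelt exp (α i)) + 1) * pCoeff hb Y w v
          + pCoeff hb Y (w * cs.simple i) v) := by
  obtain rfl : h = hb := funext fun u => (hbasis u).symm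
  have hmul_simple (u : W) (hu : ¬cs.IsRightDescent u i) :
      hb (u * cs.simple i) = hb u * hb (cs.simple i) :=
    hmul u _ (by rw [cs.not_isRightDescent_iff.mp hu, cs.length_simple])
  have hstep : pCoeff hb Y w (v * cs.simple i) = hb.repr (Y v * hb (cs.simple i)) w
      + (t1 + t2) / wK v (Eelt exp (α i)) * pCoeff hb Y w v := by
    rw [pCoeff, hYrec v i (cs.not_isRightDescent_iff.mp (bruhatLT_mul_simple_iff.mp hvs)),
      hb.repr_mul_add_algebraMap, pCoeff]
  refine ⟨fun hws => ?_, fun hws => ?_⟩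
  · rw [hstep, repr_mul_simple_of_not_isRightDescent cs hb hmul_simple (hquad i)
      (bruhatLT_mul_simple_iff.mp hws), pCoeff, pCoeff]
    ring
  · rw [hstep, repr_mul_simple_of_isRightDescent cs hb hmul_simple (hquad i)
      (isRightDescent_of_bruhatLT_mul_simple hws), pCoeff, pCoeff]
    ring

/-- right recurrence for `p`: if `vs > v` then
`p(w,vs) = ((t1+t2)/(v E(α_s)))·p(w,v) − t1t2·p(ws,v)` if `ws > w`, and
`p(w,vs) = (t1+t2)(1/(v E(α_s)) + 1)·p(w,v) + p(ws,v)` if `ws < w`. -/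
theorem pCoeff_right_recurrence
    {r : ℕ} {W : Type*} [Group W] [Fintype W] {M : CoxeterMatrix (Fin r)}
    (cs : CoxeterSystem M W)
    {Λ : Type*} [AddCommGroup Λ] (wΛ : W →* Multiplicative (AddAut Λ)) (α : Fin r → Λ)
    (coroot : Fin r → (Λ →+ ℤ))
    (hact : ∀ (i : Fin r) (lam : Λ), Multiplicative.toAdd (wΛ (cs.simple i)) lam = lam - (coroot i lam) • α i)
    (hαα : ∀ i : Fin r, coroot i (α i) = 2)
    (hindep : LinearIndependent ℤ α)
    (hcart : ∀ i j : Fin r, i ≠ j →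
      (M.M i j = 2 ∧ coroot i (α j) = 0 ∧ coroot j (α i) = 0) ∨
      (M.M i j = 3 ∧ coroot i (α j) = -1 ∧ coroot j (α i) = -1) ∨
      (M.M i j = 4 ∧ coroot i (α j) * coroot j (α i) = 2 ∧
        coroot i (α j) < 0 ∧ coroot j (α i) < 0) ∨
      (M.M i j = 6 ∧ coroot i (α j) * coroot j (α i) = 3 ∧
        coroot i (α j) < 0 ∧ coroot j (α i) < 0))
    {K : Type*} [Field K] (exp : Multiplicative Λ →* Kˣ)
    (hexp_inj : Function.Injective exp)
    (t1 t2 : K) (wK : W →* RingAut K)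
    (hwexp : ∀ (w : W) (lam : Λ),
      wK w ((exp (Multiplicative.ofAdd lam) : Kˣ) : K)
        = ((exp (Multiplicative.ofAdd (Multiplicative.toAdd (wΛ w) lam)) : Kˣ) : K))
    (hwt1 : ∀ w : W, wK w t1 = t1) (hwt2 : ∀ w : W, wK w t2 = t2)
    {H : Type*} [Ring H] [Algebra K H]
    (h : W → H) (hb : Module.Basis W K H)
    (hbasis : ∀ w : W, hb w = h w)
    (hone : h 1 = 1)
    (hmul : ∀ u v : W, cs.length (u * v) = cs.length u + cs.length v →
      h (u * v) = h u * h v)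
    (hquad : ∀ i : Fin r,
      (h (cs.simple i) - algebraMap K H t1) * (h (cs.simple i) - algebraMap K H t2) = 0)
    (Y : W → H) (hY1 : Y 1 = 1)
    (hYrec : ∀ (w : W) (i : Fin r), cs.length (w * cs.simple i) = cs.length w + 1 →
      Y (w * cs.simple i)
        = Y w * (h (cs.simple i) + algebraMap K H ((t1 + t2) / wK w (Eelt exp (α i)))))
    (w v : W) (i : Fin r)
    (hvs : bruhatLT cs v (v * cs.simple i)) :
    (bruhatLT cs w (w * cs.simple i) →
      pCoeff hb Y w (v * cs.simple i)
        = (t1 + t2) / wK v (Eelt exp (α i)) * pCoeff hb Y w v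
          - t1 * t2 * pCoeff hb Y (w * cs.simple i) v) ∧
    (bruhatLT cs (w * cs.simple i) w →
      pCoeff hb Y w (v * cs.simple i)
        = (t1 + t2) * (1 / wK v (Eelt exp (α i)) + 1) * pCoeff hb Y w v
          + pCoeff hb Y (w * cs.simple i) v) :=
  pCoeff_right_recurrence_general cs α exp t1 t2 wK h hb hbasis hmul hquad Y hYrec w v i hvs
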